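/- arXiv:2309.08786 — 5 statements merged into one kernel-verified Lean document; each statement's English description precedes it below -/
import Mathlib

section
/- Let d be a positive even integer, and identify S^{2d-1} with the unit sphere in ℂ^d. Then the map m : S^1 × S^{2d-1} → S^{2d-1} given by m(λ, ξ) = λξ is homotopic to the projection map p(λ, ξ) = ξ. -/
/-!
Identify `ℂ^(m+m)` with `ℍ^m`, so that `ξ ↦ λ • ξ` is left multiplication by `λ ∈ S¹ ⊂ S³`.
Left multiplication by any unit quaternion is an isometry, so a path in `S³` from `1` to `λ`,
depending continuously on `λ`, gives the homotopy. Such a path is obtained by lifting the segment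
from `1` to `λ` in the unit disc to the upper hemisphere `a ↦ a + √(1 - ‖a‖²) j` of `S³`.
Of the quaternions only left multiplication `J` by `j` is needed: an antiunitary map with `J² = -1`.
-/

open scoped unitInterval InnerProductSpace ComplexConjugate

section QuaternionicStructure

variable {E : Type*} [NormedAddCommGroup E] [InnerProductSpace ℂ E] {J : E → E}

theorem inner_self_map_eq_zero_of_antiunitary (hJ : ∀ x y, ⟪J x, J y⟫_ℂ = ⟪y, x⟫_ℂ)
    (hJJ : ∀ x, J (J x) = -x) (x : E) : ⟪x, J x⟫_ℂ = 0 := by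
  have h : ⟪J x, x⟫_ℂ = -⟪J x, x⟫_ℂ := by
    simpa only [hJJ, inner_neg_right] using (hJ x (J x)).symm
  rw [← inner_conj_symm, self_eq_neg.mp h, map_zero]

theorem norm_map_of_antiunitary (hJ : ∀ x y, ⟪J x, J y⟫_ℂ = ⟪y, x⟫_ℂ) (x : E) :
    ‖J x‖ = ‖x‖ := by
  rw [← sq_eq_sq₀ (norm_nonneg _) (norm_nonneg _), @norm_sq_eq_re_inner ℂ,
    @norm_sq_eq_re_inner ℂ, hJ]

theorem norm_sq_smul_add_smul_map (hJ : ∀ x y, ⟪J x, J y⟫_ℂ = ⟪y, x⟫_ℂ)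
    (hJJ : ∀ x, J (J x) = -x) (a b : ℂ) (x : E) :
    ‖a • x + b • J x‖ ^ 2 = (‖a‖ ^ 2 + ‖b‖ ^ 2) * ‖x‖ ^ 2 := by
  rw [@norm_add_sq ℂ, inner_smul_left, inner_smul_right,
    inner_self_map_eq_zero_of_antiunitary hJ hJJ, norm_smul, norm_smul,
    norm_map_of_antiunitary hJ]
  simp only [mul_zero, map_zero]
  ring

/-- Left multiplication by the unit quaternion `a + √(1 - ‖a‖²) j`, the point of the upper
hemisphere of `S³` lying over `a` in the unit disc, when `J` is multiplication by `j`. -/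
noncomputable def hemisphereSMul (J : E → E) (a : ℂ) (x : E) : E :=
  a • x + (√(1 - ‖a‖ ^ 2) : ℂ) • J x

theorem norm_hemisphereSMul (hJ : ∀ x y, ⟪J x, J y⟫_ℂ = ⟪y, x⟫_ℂ)
    (hJJ : ∀ x, J (J x) = -x) {a : ℂ} (ha : ‖a‖ ≤ 1) (x : E) :
    ‖hemisphereSMul J a x‖ = ‖x‖ := by
  have hsq : ‖a‖ ^ 2 + ‖(√(1 - ‖a‖ ^ 2) : ℂ)‖ ^ 2 = 1 := by
    rw [Complex.norm_real, Real.norm_of_nonneg (Real.sqrt_nonneg _),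
      Real.sq_sqrt (by nlinarith [norm_nonneg a])]
    ring
  rw [← sq_eq_sq₀ (norm_nonneg _) (norm_nonneg _), hemisphereSMul,
    norm_sq_smul_add_smul_map hJ hJJ, hsq, one_mul]

theorem hemisphereSMul_of_norm_eq_one {a : ℂ} (ha : ‖a‖ = 1) (x : E) :
    hemisphereSMul J a x = a • x := by
  simp [hemisphereSMul, ha]

theorem hemisphereSMul_one (x : E) : hemisphereSMul J 1 x = x := by
  simpa using hemisphereSMul_of_norm_eq_one (J := J) norm_one x

theorem continuous_hemisphereSMul (hJc : Continuous J) :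
    Continuous fun p : ℂ × E => hemisphereSMul J p.1 p.2 := by
  unfold hemisphereSMul
  fun_prop

theorem norm_segment_one_le {l : ℂ} (hl : ‖l‖ = 1) {t : ℝ} (ht : t ∈ I) :
    ‖((1 - t : ℝ) : ℂ) + t * l‖ ≤ 1 := by
  obtain ⟨ht0, ht1⟩ := ht
  calc ‖((1 - t : ℝ) : ℂ) + t * l‖ ≤ ‖((1 - t : ℝ) : ℂ)‖ + ‖(t : ℂ) * l‖ := norm_add_le _ _
    _ = 1 := by
      rw [norm_mul, hl, Complex.norm_real, Complex.norm_real, Real.norm_of_nonneg (by linarith),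
        Real.norm_of_nonneg ht0]
      ring

theorem exists_homotopy_smul_of_antiunitary (hJc : Continuous J)
    (hJ : ∀ x y, ⟪J x, J y⟫_ℂ = ⟪y, x⟫_ℂ) (hJJ : ∀ x, J (J x) = -x) :
    ∃ H : C(I × (Metric.sphere (0 : ℂ) 1 × Metric.sphere (0 : E) 1), E),
      (∀ t l ξ, ‖H (t, (l, ξ))‖ = 1) ∧
      (∀ l ξ, H (0, (l, ξ)) = (ξ : E)) ∧
      (∀ l ξ, H (1, (l, ξ)) = (l : ℂ) • (ξ : E)) := by
  refine ⟨⟨fun p => hemisphereSMul J (((1 - p.1 : ℝ) : ℂ) + (p.1 : ℝ) * p.2.1) p.2.2, ?_⟩,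
    fun t l ξ => ?_, fun l ξ => ?_, fun l ξ => ?_⟩
  · have hpath : Continuous fun p : I × (Metric.sphere (0 : ℂ) 1 × Metric.sphere (0 : E) 1) =>
        ((((1 - p.1 : ℝ) : ℂ) + (p.1 : ℝ) * p.2.1, (p.2.2 : E)) : ℂ × E) := by fun_prop
    exact (continuous_hemisphereSMul hJc).comp hpath
  · have hl : ‖(l : ℂ)‖ = 1 := by simp
    have hξ : ‖(ξ : E)‖ = 1 := by simp
    simpa [hξ] using norm_hemisphereSMul hJ hJJ (norm_segment_one_le hl t.2) ξ
  · simpa using hemisphereSMul_one (J := J) (ξ : E)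
  · simpa using hemisphereSMul_of_norm_eq_one (J := J) (by simp : ‖(l : ℂ)‖ = 1) (ξ : E)

end QuaternionicStructure

/-- Left multiplication by `j` on `ℍ^m`, where `(z, w) ∈ ℂ^m × ℂ^m` stands for `z + w j`:
`j (z + w j) = -w̄ + z̄ j`. -/
noncomputable def quaternionicJ (m : ℕ) (x : EuclideanSpace ℂ (Fin (m + m))) :
    EuclideanSpace ℂ (Fin (m + m)) :=
  WithLp.toLp 2 <|
    Fin.append (fun i => -conj (x (Fin.natAdd m i))) fun i => conj (x (Fin.castAdd m i))

theorem inner_quaternionicJ (m : ℕ) (x y : EuclideanSpace ℂ (Fin (m + m))) :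
    ⟪quaternionicJ m x, quaternionicJ m y⟫_ℂ = ⟪y, x⟫_ℂ := by
  simp only [PiLp.inner_apply, Fin.sum_univ_add, quaternionicJ, Fin.append_left,
    Fin.append_right, RCLike.inner_apply, map_neg, Complex.conj_conj, neg_mul_neg]
  rw [add_comm]
  simp only [mul_comm]

theorem quaternionicJ_quaternionicJ (m : ℕ) (x : EuclideanSpace ℂ (Fin (m + m))) :
    quaternionicJ m (quaternionicJ m x) = -x := by
  ext i
  refine Fin.addCases (fun i => ?_) (fun i => ?_) i <;>
    simp only [quaternionicJ, Fin.append_left, Fin.append_right, PiLp.toLp_apply, map_neg,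
      Complex.conj_conj, PiLp.neg_apply]

theorem continuous_quaternionicJ (m : ℕ) : Continuous (quaternionicJ m) := by
  unfold quaternionicJ
  fun_prop

theorem scalar_mul_homotopic_to_proj_general (d : ℕ) (hde : Even d) :
    ∃ H : C(I × (Metric.sphere (0 : ℂ) 1 × Metric.sphere (0 : EuclideanSpace ℂ (Fin d)) 1),
            EuclideanSpace ℂ (Fin d)),
      (∀ t l ξ, ‖H (t, (l, ξ))‖ = 1) ∧
      (∀ l ξ, H (0, (l, ξ)) = (ξ : EuclideanSpace ℂ (Fin d))) ∧
      (∀ l ξ, H (1, (l, ξ)) = (l : ℂ) • (ξ : EuclideanSpace ℂ (Fin d))) := by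
  obtain ⟨m, rfl⟩ := hde
  exact exists_homotopy_smul_of_antiunitary (continuous_quaternionicJ m) (inner_quaternionicJ m)
    (quaternionicJ_quaternionicJ m)

/-- For `d` a positive even integer, the scalar multiplication map
`m : S¹ × S^{2d-1} → S^{2d-1}`, `m(λ, ξ) = λ • ξ`, is homotopic to the projection
`p(λ, ξ) = ξ`, where `S^{2d-1}` is the unit sphere of `ℂ^d` and `S¹` the unit circle in `ℂ`.
The homotopy is a continuous map `H : [0,1] × S¹ × S^{2d-1} → S^{2d-1}` with
`H(0, λ, ξ) = ξ` and `H(1, λ, ξ) = λ • ξ`. -/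
theorem scalar_mul_homotopic_to_proj (d : ℕ) (hd : 0 < d) (hde : Even d) :
    ∃ H : C(I × (Metric.sphere (0 : ℂ) 1 × Metric.sphere (0 : EuclideanSpace ℂ (Fin d)) 1),
            EuclideanSpace ℂ (Fin d)),
      (∀ t l ξ, ‖H (t, (l, ξ))‖ = 1) ∧
      (∀ l ξ, H (0, (l, ξ)) = (ξ : EuclideanSpace ℂ (Fin d))) ∧
      (∀ l ξ, H (1, (l, ξ)) = (l : ℂ) • (ξ : EuclideanSpace ℂ (Fin d))) :=
  scalar_mul_homotopic_to_proj_general d hde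
end

section
/- Let X be a compact Hausdorff space, Y ⊆ X closed, n a positive integer, p₀ ∈ C(Y, M_n) and q ∈ C(X, M_n) projections with p₀(x) ⊥ q(x) for all x ∈ Y. Then there exist a closed set Z ⊆ X with Y ⊆ int(Z) and a projection p ∈ C(Z, M_n) such that p|_Y = p₀ and p(x) ⊥ q(x) for all x ∈ Z. -/
/-!
Extend `p₀` by Tietze to a continuous `g` and compress its real part: `a = (1 - q) (Re g) (1 - q)`
is self-adjoint, satisfies `a q = 0`, and equals `p₀` on `Y`. Where `‖a² - a‖ < 1/4` the spectrum
of `a` misses `1/2` (spectral mapping, as `(1/2)² - 1/2 = -1/4`), so on the closed neighbourhood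
`Z = {‖a² - a‖ ≤ 1/8}` of `Y` the spectral projection `χ_{(1/2, ∞)}(a)` depends continuously on
the point. It is `p₀` on `Y`, and it is orthogonal to `q` because
`χ_{(1/2, ∞)}(t) = (t⁻¹ χ_{(1/2, ∞)}(t)) · t` factors through `a`.
-/

/-- The n×n complex matrices. -/
abbrev Mat (n : ℕ) := Matrix (Fin n) (Fin n) ℂ

/-- A projection in `M_n(ℂ)`: a self-adjoint idempotent. -/
def IsProjMat {n : ℕ} (m : Mat n) : Prop := m * m = m ∧ star m = m

open Set Filter Topology

theorem continuousOn_ite_lt_compl_singleton {c : ℝ} {f : ℝ → ℝ} (hf : ContinuousOn f (Ioi c)) :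
    ContinuousOn (fun t => if c < t then f t else 0) {c}ᶜ := by
  intro t ht
  refine ContinuousAt.continuousWithinAt ?_
  rcases lt_or_gt_of_ne ht with hlt | hgt
  · refine (continuousAt_const (y := (0 : ℝ))).congr ?_
    filter_upwards [eventually_lt_nhds hlt] with s hs
    rw [if_neg hs.not_gt]
  · refine (hf.continuousAt (Ioi_mem_nhds hgt)).congr ?_
    filter_upwards [eventually_gt_nhds hgt] with s hs
    rw [if_pos hs]

section SpectralProjection

variable {A : Type*} [CStarAlgebra A]

noncomputable def spectralProjAboveHalf (a : A) : A :=
  cfc (fun t : ℝ => if 2⁻¹ < t then 1 else 0) a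

theorem half_notMem_spectrum_of_norm_mul_self_sub_lt {a : A} (h : ‖a * a - a‖ < 4⁻¹) :
    (2⁻¹ : ℝ) ∉ spectrum ℝ a := by
  intro hmem
  have : Nontrivial A := by
    by_contra hA
    rw [not_nontrivial_iff_subsingleton] at hA
    rw [spectrum.of_subsingleton] at hmem
    exact hmem
  have hsq : (2⁻¹ * 2⁻¹ - 2⁻¹ : ℝ) ∈ spectrum ℝ (a * a - a) := by
    have := spectrum.subset_polynomial_aeval a (Polynomial.X * Polynomial.X - Polynomial.X)
      ⟨_, hmem, rfl⟩
    simp only [Polynomial.eval_sub, Polynomial.eval_mul, Polynomial.eval_X, map_sub, map_mul,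
      Polynomial.aeval_X] at this
    exact this
  have := spectrum.norm_le_norm_of_mem hsq
  norm_num at this
  linarith

theorem continuousOn_spectrum_ite_half_lt {a : A} (h : (2⁻¹ : ℝ) ∉ spectrum ℝ a) {f : ℝ → ℝ}
    (hf : ContinuousOn f (Ioi 2⁻¹)) :
    ContinuousOn (fun t => if 2⁻¹ < t then f t else 0) (spectrum ℝ a) :=
  (continuousOn_ite_lt_compl_singleton hf).mono fun t ht => by rintro rfl; exact h ht

theorem isStarProjection_spectralProjAboveHalf {a : A}
    (h : (2⁻¹ : ℝ) ∉ spectrum ℝ a) : IsStarProjection (spectralProjAboveHalf a) := by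
  have hcont := continuousOn_spectrum_ite_half_lt h (continuousOn_const (c := (1 : ℝ)))
  refine ⟨?_, cfc_predicate _ a⟩
  rw [IsIdempotentElem, spectralProjAboveHalf, ← cfc_mul _ _ a]
  congr 1
  ext t
  split_ifs <;> norm_num

theorem spectralProjAboveHalf_mul_eq_zero {a r : A} (ha : IsSelfAdjoint a)
    (h : (2⁻¹ : ℝ) ∉ spectrum ℝ a) (har : a * r = 0) : spectralProjAboveHalf a * r = 0 := by
  have hinv := continuousOn_spectrum_ite_half_lt h (continuousOn_inv₀.mono fun t ht =>
    (lt_trans (by norm_num) (mem_Ioi.mp ht)).ne')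
  have hfac : spectralProjAboveHalf a =
      cfc (fun t : ℝ => if 2⁻¹ < t then t⁻¹ else 0) a * cfc (fun t : ℝ => t) a := by
    rw [spectralProjAboveHalf, ← cfc_mul _ _ a hinv]
    refine cfc_congr fun t _ => ?_
    split_ifs with ht
    · rw [inv_mul_cancel₀]; positivity
    · simp
  rw [hfac, cfc_id' ℝ a, mul_assoc, har, mul_zero]

theorem IsStarProjection.spectralProjAboveHalf_eq {p : A} (hp : IsStarProjection p) :
    spectralProjAboveHalf p = p := by
  have hspec := (isStarProjection_iff_spectrum_subset_and_isSelfAdjoint.mp hp).1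
  have hsa := hp.isSelfAdjoint
  nth_rewrite 2 [← cfc_id' ℝ p]
  refine cfc_congr fun t ht => ?_
  rcases hspec ht with rfl | rfl <;> norm_num

theorem ContinuousOn.spectralProjAboveHalf {X : Type*} [TopologicalSpace X] {a : X → A}
    {s : Set X} (ha : ContinuousOn a s) (hsa : ∀ x ∈ s, IsSelfAdjoint (a x))
    (hs : ∀ x ∈ s, (2⁻¹ : ℝ) ∉ spectrum ℝ (a x)) :
    ContinuousOn (fun x => _root_.spectralProjAboveHalf (a x)) s := by
  refine ContinuousOn.cfc_of_mem_nhdsSet _ (isOpen_compl_singleton.mem_nhdsSet.mpr ?_) ha hsa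
    (continuousOn_ite_lt_compl_singleton continuousOn_const)
  simp only [iUnion_subset_iff]
  intro x hx t ht rfl
  exact hs x hx ht

end SpectralProjection

section Compression

variable {R : Type*} [Ring R]

theorem IsSelfAdjoint.one_sub_mul_mul_one_sub [StarRing R] {a q : R} (ha : IsSelfAdjoint a)
    (hq : IsSelfAdjoint q) : IsSelfAdjoint ((1 - q) * a * (1 - q)) := by
  simpa [hq.star_eq] using ha.conjugate' (1 - q)

theorem IsIdempotentElem.one_sub_mul_mul_one_sub_mul_self {q : R} (hq : IsIdempotentElem q)
    (a : R) : (1 - q) * a * (1 - q) * q = 0 := by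
  rw [mul_assoc, hq.one_sub_mul_self, mul_zero]

theorem one_sub_mul_mul_one_sub_eq_self [StarRing R] {p q : R} (hp : IsSelfAdjoint p)
    (hq : IsSelfAdjoint q) (hpq : p * q = 0) : (1 - q) * p * (1 - q) = p := by
  have hqp : q * p = 0 := by simpa [hp.star_eq, hq.star_eq] using congr(star $hpq)
  rw [sub_mul, one_mul, hqp, sub_zero, mul_sub, mul_one, hpq, sub_zero]

end Compression

theorem exists_closed_nbhd_starProjection_extension {X A : Type*} [TopologicalSpace X]
    [CStarAlgebra A] {Y : Set X} {a r : X → A} (ha : Continuous a)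
    (hsa : ∀ x, IsSelfAdjoint (a x)) (har : ∀ x, a x * r x = 0)
    (hY : ∀ x ∈ Y, IsStarProjection (a x)) :
    ∃ Z : Set X, IsClosed Z ∧ Y ⊆ interior Z ∧
      ∃ p : C(Z, A), (∀ z, IsStarProjection (p z)) ∧
        (∀ x ∈ Y, ∀ hz : x ∈ Z, p ⟨x, hz⟩ = a x) ∧ ∀ x (hz : x ∈ Z), p ⟨x, hz⟩ * r x = 0 := by
  set Z := {x | ‖a x * a x - a x‖ ≤ 8⁻¹}
  have hspec : ∀ x ∈ Z, (2⁻¹ : ℝ) ∉ spectrum ℝ (a x) := fun x hx =>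
    half_notMem_spectrum_of_norm_mul_self_sub_lt (lt_of_le_of_lt hx (by norm_num))
  have hYZ : Y ⊆ interior Z := by
    have hopen : IsOpen {x | ‖a x * a x - a x‖ < 8⁻¹} :=
      isOpen_lt (by fun_prop) continuous_const
    refine subset_trans (fun x hx => ?_) (hopen.subset_interior_iff.mpr
      fun x (hx : ‖a x * a x - a x‖ < 8⁻¹) => hx.le)
    simp [(hY x hx).isIdempotentElem.eq]
  refine ⟨Z, isClosed_le (by fun_prop) continuous_const, hYZ,
    ⟨_, ((ha.continuousOn (s := Z)).spectralProjAboveHalf (fun x _ => hsa x) hspec).domRestrict⟩,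
    fun z => isStarProjection_spectralProjAboveHalf (hspec z z.2), fun x hx _ => ?_,
    fun x hz => spectralProjAboveHalf_mul_eq_zero (hsa x) (hspec x hz) (har x)⟩
  exact (hY x hx).spectralProjAboveHalf_eq

open scoped ComplexStarModule

theorem extend_orthogonal_projection_to_closed_nbhd_general
    {X : Type*} [TopologicalSpace X] [CompactSpace X] [T2Space X]
    (Y : Set X) (hY : IsClosed Y) (n : ℕ)
    (p₀ : C(Y, Mat n)) (hp₀ : ∀ y, IsProjMat (p₀ y))
    (q : C(X, Mat n)) (hq : ∀ x, IsProjMat (q x))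
    (horth : ∀ (x : X) (hx : x ∈ Y), p₀ ⟨x, hx⟩ * q x = 0) :
    ∃ Z : Set X, IsClosed Z ∧ Y ⊆ interior Z ∧
      ∃ p : C(Z, Mat n), (∀ z, IsProjMat (p z)) ∧
        (∀ (x : X) (hy : x ∈ Y) (hz : x ∈ Z), p ⟨x, hz⟩ = p₀ ⟨x, hy⟩) ∧
        (∀ (x : X) (hz : x ∈ Z), p ⟨x, hz⟩ * q x = 0) := by
  obtain ⟨g, hg⟩ := p₀.exists_restrict_eq hY
  have hgY : ∀ x (hx : x ∈ Y), g x = p₀ ⟨x, hx⟩ := fun x hx => DFunLike.congr_fun hg ⟨x, hx⟩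
  have haY : ∀ x (hx : x ∈ Y), (1 - q x) * (ℜ (g x) : Mat n) * (1 - q x) = p₀ ⟨x, hx⟩ := by
    intro x hx
    rw [hgY x hx, IsSelfAdjoint.coe_realPart (hp₀ _).2]
    exact one_sub_mul_mul_one_sub_eq_self (hp₀ _).2 (hq x).2 (horth x hx)
  open scoped Matrix.Norms.L2Operator in
  obtain ⟨Z, hZ, hYZ, p, hp, hpY, hpq⟩ := exists_closed_nbhd_starProjection_extension
    (Y := Y) (a := fun x => (1 - q x) * (ℜ (g x) : Mat n) * (1 - q x)) (r := q)
    (by simp only [realPart_apply_coe]; fun_prop)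
    (fun x => (ℜ (g x)).2.one_sub_mul_mul_one_sub (hq x).2)
    (fun x => IsIdempotentElem.one_sub_mul_mul_one_sub_mul_self (hq x).1 _)
    (fun x hx => by rw [haY x hx]; exact ⟨(hp₀ _).1, (hp₀ _).2⟩)
  exact ⟨Z, hZ, hYZ, p, fun z => ⟨(hp z).1, (hp z).2⟩,
    fun x hx hz => (hpY x hx hz).trans (haY x hx), hpq⟩

/-- Lemma 2.2(1): Let `X` be a compact Hausdorff space, `Y ⊆ X` closed,
`p₀ ∈ C(Y, M_n)` and `q ∈ C(X, M_n)` projections with `p₀(x) ⊥ q(x)` for `x ∈ Y`.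
Then there are a closed set `Z ⊆ X` with `Y ⊆ int(Z)` and a projection `p ∈ C(Z, M_n)`
with `p|_Y = p₀` and `p(x) ⊥ q(x)` for all `x ∈ Z`. -/
theorem extend_orthogonal_projection_to_closed_nbhd
    {X : Type*} [TopologicalSpace X] [CompactSpace X] [T2Space X]
    (Y : Set X) (hY : IsClosed Y) (n : ℕ) (hn : 0 < n)
    (p₀ : C(Y, Mat n)) (hp₀ : ∀ y, IsProjMat (p₀ y))
    (q : C(X, Mat n)) (hq : ∀ x, IsProjMat (q x))
    (horth : ∀ (x : X) (hx : x ∈ Y), p₀ ⟨x, hx⟩ * q x = 0) :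
    ∃ Z : Set X, IsClosed Z ∧ Y ⊆ interior Z ∧
      ∃ p : C(Z, Mat n), (∀ z, IsProjMat (p z)) ∧
        (∀ (x : X) (hy : x ∈ Y) (hz : x ∈ Z), p ⟨x, hz⟩ = p₀ ⟨x, hy⟩) ∧
        (∀ (x : X) (hz : x ∈ Z), p ⟨x, hz⟩ * q x = 0) :=
  extend_orthogonal_projection_to_closed_nbhd_general Y hY n p₀ hp₀ q hq horth
end

section
/- Let X be a compact Hausdorff space, Y ⊆ X closed, n a positive integer, p₀ ∈ C(Y, M_n) and q, e ∈ C(X, M_n) projections with p₀ ⊥ q|_Y, and suppose s₀ ∈ C(Y, M_n) satisfies s₀s₀* = p₀ and s₀*s₀ = e|_Y. Then there exist a closed set Z ⊆ X with Y ⊆ int(Z), a projection p ∈ C(Z, M_n) with p|_Y = p₀ and p ⊥ q|_Z, and an element s ∈ C(Z, M_n) satisfying ss* = p, s*s = e|_Z, and s|_Y = s₀. -/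
section CStarAlgebra

variable {A : Type*} [CStarAlgebra A]

lemma spectrum_subset_Icc_of_norm_sub_one_le {a : A} {r : ℝ} (h : ‖a - 1‖ ≤ r) :
    spectrum ℝ a ⊆ Set.Icc (1 - r) (1 + r) := by
  rcases subsingleton_or_nontrivial A with hA | hA
  · simp [spectrum.of_subsingleton]
  intro k hk
  have hk1 := Set.sub_mem_sub hk (Set.mem_singleton (1 : ℝ))
  rw [spectrum.sub_singleton_eq, map_one] at hk1
  have hk1_le := (spectrum.norm_le_norm_of_mem hk1).trans h
  rw [Real.norm_eq_abs, abs_le] at hk1_le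
  constructor <;> linarith [hk1_le.1, hk1_le.2]

lemma mul_star_mul_self_of_isIdempotentElem {s : A} (h : IsIdempotentElem (star s * s)) :
    s * (star s * s) = s := by
  rw [← sub_eq_zero, ← CStarRing.star_mul_self_eq_zero_iff]
  set p := star s * s
  have hp3 : p * p * p = p := by rw [h.eq, h.eq]
  calc star (s * p - s) * (s * p - s) = p * p * p - p * p - p * p + p := by
        simp only [p, star_sub, star_mul, star_star]; noncomm_ring
    _ = 0 := by rw [hp3, h.eq]; abel

lemma one_sub_mul_mul_eq_self {q s : A} (hq : IsSelfAdjoint q)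
    (hs : IsIdempotentElem (star s * s)) (hsq : s * star s * q = 0) :
    (1 - q) * s * (star s * s) = s := by
  have hqs : q * s = 0 :=
    calc q * s = star (s * star s * q) * s := by
          rw [star_mul, star_mul, star_star, hq.star_eq, mul_assoc q, mul_assoc s,
            mul_star_mul_self_of_isIdempotentElem hs]
      _ = 0 := by rw [hsq, star_zero, zero_mul]
  rw [mul_assoc, mul_star_mul_self_of_isIdempotentElem hs, sub_mul, one_mul, hqs, sub_zero]

lemma mul_star_mul_eq_zero_of_mul_eq_zero {q s : A} (hq : IsSelfAdjoint q) (h : q * s = 0) :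
    s * star s * q = 0 := by
  rw [mul_assoc, ← hq.star_eq, ← star_mul, h, star_zero, mul_zero]

/-- When `c * e = c`, this is the polar part `c |c|⁻¹` of `c` inside the corner `e A e`: adding
`1 - e` makes `star c * c` invertible as an element of `A` without changing the product with `c`. -/
noncomputable def polarPart (e c : A) : A :=
  c * cfc (fun x : ℝ => (√x)⁻¹) (star c * c + 1 - e)

lemma continuous_polarPart {Z : Type*} [TopologicalSpace Z] {e c : Z → A} (he : Continuous e)
    (hc : Continuous c) (he_sa : ∀ z, IsSelfAdjoint (e z)) {r : ℝ} (hr : r < 1)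
    (h : ∀ z, ‖star (c z) * c z - e z‖ ≤ r) :
    Continuous fun z => polarPart (e z) (c z) := by
  have hspec : ∀ z, spectrum ℝ (star (c z) * c z + 1 - e z) ⊆ Set.Icc (1 - r) (1 + r) :=
    fun z => spectrum_subset_Icc_of_norm_sub_one_le (by convert h z using 2; abel)
  have hf : ContinuousOn (fun x : ℝ => (√x)⁻¹) (Set.Icc (1 - r) (1 + r)) :=
    Real.continuous_sqrt.continuousOn.inv₀ fun x hx => (Real.sqrt_pos.2 (by linarith [hx.1])).ne'
  exact hc.mul <| Continuous.cfc' isCompact_Icc _ (by fun_prop) hspec hf fun z =>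
    ((IsSelfAdjoint.star_mul_self (c z)).add (.one A)).sub (he_sa z)

variable {e c : A}

lemma star_polarPart_mul_polarPart (he : IsStarProjection e) (hce : c * e = c)
    (h : ‖star c * c - e‖ < 1) :
    star (polarPart e c) * polarPart e c = e := by
  set a := star c * c + 1 - e
  have hspec : ∀ x ∈ spectrum ℝ a, 0 < x := fun x hx => by
    have := spectrum_subset_Icc_of_norm_sub_one_le (a := a) (r := ‖star c * c - e‖)
      (le_of_eq (congrArg norm (by simp only [a]; abel))) hx
    linarith [this.1]
  set g := cfc (fun x : ℝ => (√x)⁻¹) a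
  have hec : e * star c = star c := by
    simpa [he.isSelfAdjoint.star_eq] using congr(star $hce)
  have hae : a * e = star c * c := by
    simp only [a, sub_mul, add_mul, mul_assoc, hce, one_mul, he.isIdempotentElem.eq]; abel
  have hea : e * a = star c * c := by
    simp only [a, mul_sub, mul_add, ← mul_assoc, hec, mul_one, he.isIdempotentElem.eq]; abel
  have hf : ContinuousOn (fun x : ℝ => (√x)⁻¹) (spectrum ℝ a) :=
    Real.continuous_sqrt.continuousOn.inv₀ fun x hx => (Real.sqrt_pos.2 (hspec x hx)).ne'
  have hgag : g * a * g = 1 := by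
    calc g * a * g = cfc (fun x : ℝ => (√x)⁻¹ * x * (√x)⁻¹) a := by
          rw [cfc_mul (fun x : ℝ => (√x)⁻¹ * x) (fun x : ℝ => (√x)⁻¹) a
              (hf.mul continuousOn_id) hf,
            cfc_mul (fun x : ℝ => (√x)⁻¹) (fun x : ℝ => x) a hf continuousOn_id,
            cfc_id' ℝ a]
      _ = cfc (fun _ : ℝ => 1) a := cfc_congr fun x hx => by
          have hx := hspec x hx
          field_simp [(Real.sqrt_pos.2 hx).ne']
          rw [Real.sq_sqrt hx.le]
      _ = 1 := cfc_const_one ℝ a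
  have hg : IsSelfAdjoint g := cfc_predicate _ _
  have hge : Commute g e := Commute.cfc_real (hae.trans hea.symm) _
  calc star (polarPart e c) * polarPart e c = g * (a * e) * g := by
        change star (c * g) * (c * g) = _
        rw [star_mul, hg.star_eq, hae]; simp only [mul_assoc]
    _ = g * a * g * e := by
        rw [← mul_assoc g a e, mul_assoc (g * a) e g, ← hge.eq, ← mul_assoc]
    _ = e := by rw [hgag, one_mul]

lemma polarPart_of_star_mul_self_eq (h : star c * c = e) : polarPart e c = c := by
  simp [polarPart, h]

lemma mul_polarPart_eq_zero {q : A} (h : q * c = 0) : q * polarPart e c = 0 := by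
  rw [polarPart, ← mul_assoc, h, zero_mul]

lemma exists_partialIsometry_extension_of_closed_nhds {X : Type*} [TopologicalSpace X]
    (Y : Set X) (q e t : C(X, A)) (hq : ∀ x, IsStarProjection (q x))
    (he : ∀ x, IsStarProjection (e x))
    (ht : ∀ x ∈ Y, star (t x) * t x = e x ∧ t x * star (t x) * q x = 0) :
    ∃ Z : Set X, IsClosed Z ∧ Y ⊆ interior Z ∧ ∃ s : C(Z, A), ∀ z : Z,
      star (s z) * s z = e z ∧ IsStarProjection (s z * star (s z)) ∧
      s z * star (s z) * q z = 0 ∧ (z.1 ∈ Y → s z = t z) := by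
  set c : X → A := fun x => (1 - q x) * t x * e x
  have hce : ∀ x, c x * e x = c x := fun x => by
    simp only [c, mul_assoc, (he x).isIdempotentElem.eq]
  have hqc : ∀ x, q x * c x = 0 := fun x => by
    simp only [c, ← mul_assoc, (hq x).mul_one_sub_self, zero_mul]
  have hcY : ∀ x ∈ Y, c x = t x := fun x hx => by
    obtain ⟨hte, htq⟩ := ht x hx
    simp only [c, ← hte]
    exact one_sub_mul_mul_eq_self (hq x).isSelfAdjoint (hte ▸ (he x).isIdempotentElem) htq
  set d : X → ℝ := fun x => ‖star (c x) * c x - e x‖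
  have hd : Continuous d := by fun_prop
  have hdY : ∀ x ∈ Y, d x < 1 / 2 := fun x hx => by simp [d, hcY x hx, (ht x hx).1]
  refine ⟨{x | d x ≤ 1 / 2}, isClosed_le hd continuous_const,
    fun x hx => ((isOpen_lt hd continuous_const).subset_interior_iff (t := {x | d x ≤ 1 / 2})).2
      (fun y (hy : d y < 1 / 2) => hy.le) (hdY x hx),
    ⟨fun z => polarPart (e z) (c z), continuous_polarPart (by fun_prop) (by fun_prop)
      (fun z => (he z).isSelfAdjoint) (by norm_num : (1 / 2 : ℝ) < 1) fun z => z.2⟩,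
    fun z => ?_⟩
  have hs : star (polarPart (e z) (c z)) * polarPart (e z) (c z) = e z :=
    star_polarPart_mul_polarPart (he z) (hce z) (z.2.trans_lt (by norm_num))
  refine ⟨hs, ⟨isIdempotentElem_star_mul_self_iff_isIdempotentElem_self_mul_star.1
    (hs ▸ (he z).isIdempotentElem), .mul_star_self _⟩,
    mul_star_mul_eq_zero_of_mul_eq_zero (hq z).isSelfAdjoint (mul_polarPart_eq_zero (hqc z)),
    fun hz => ?_⟩
  change polarPart (e z) (c z) = t z
  rw [hcY z hz]
  exact polarPart_of_star_mul_self_eq (ht z hz).1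

end CStarAlgebra

theorem extend_projection_with_partial_isometry_general
    {X : Type*} [TopologicalSpace X] [CompactSpace X] [T2Space X]
    (Y : Set X) (hY : IsClosed Y) (n : ℕ)
    (p₀ : C(Y, Mat n))
    (q : C(X, Mat n)) (hq : ∀ x, IsProjMat (q x))
    (e : C(X, Mat n)) (he : ∀ x, IsProjMat (e x))
    (horth : ∀ (x : X) (hx : x ∈ Y), p₀ ⟨x, hx⟩ * q x = 0)
    (s₀ : C(Y, Mat n))
    (hs₀ : ∀ (x : X) (hx : x ∈ Y),
      s₀ ⟨x, hx⟩ * star (s₀ ⟨x, hx⟩) = p₀ ⟨x, hx⟩ ∧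
      star (s₀ ⟨x, hx⟩) * s₀ ⟨x, hx⟩ = e x) :
    ∃ Z : Set X, IsClosed Z ∧ Y ⊆ interior Z ∧
      ∃ (p : C(Z, Mat n)) (s : C(Z, Mat n)),
        (∀ z, IsProjMat (p z)) ∧
        (∀ (x : X) (hy : x ∈ Y) (hz : x ∈ Z), p ⟨x, hz⟩ = p₀ ⟨x, hy⟩) ∧
        (∀ (x : X) (hz : x ∈ Z), p ⟨x, hz⟩ * q x = 0) ∧
        (∀ (x : X) (hz : x ∈ Z),
          s ⟨x, hz⟩ * star (s ⟨x, hz⟩) = p ⟨x, hz⟩ ∧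
          star (s ⟨x, hz⟩) * s ⟨x, hz⟩ = e x) ∧
        (∀ (x : X) (hy : x ∈ Y) (hz : x ∈ Z), s ⟨x, hz⟩ = s₀ ⟨x, hy⟩) := by
  obtain ⟨t, rfl⟩ := s₀.exists_restrict_eq hY
  simp only [ContinuousMap.restrict_apply] at hs₀ horth ⊢
  open scoped Matrix.Norms.L2Operator in
  obtain ⟨Z, hZ, hYZ, s, hs⟩ := exists_partialIsometry_extension_of_closed_nhds Y q e t
    (fun x => ⟨(hq x).1, (hq x).2⟩) (fun x => ⟨(he x).1, (he x).2⟩) fun x hx =>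
      ⟨(hs₀ x hx).2, by rw [(hs₀ x hx).1]; exact horth x hx⟩
  refine ⟨Z, hZ, hYZ, ⟨fun z => s z * star (s z), by fun_prop⟩, s,
    fun z => ⟨(hs z).2.1.1, (hs z).2.1.2⟩, fun x hy hz => ?_, fun x hz => (hs _).2.2.1,
    fun x hz => ⟨rfl, (hs _).1⟩, fun x hy hz => (hs ⟨x, hz⟩).2.2.2 hy⟩
  rw [← (hs₀ x hy).1]
  exact congrArg (fun m => m * star m) ((hs ⟨x, hz⟩).2.2.2 hy)

/-- Lemma 2.2(2): Let `X` be compact Hausdorff, `Y ⊆ X` closed,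
`p₀ ∈ C(Y, M_n)` and `q, e ∈ C(X, M_n)` projections with `p₀ ⊥ q|_Y`, and suppose
`s₀ ∈ C(Y, M_n)` satisfies `s₀s₀* = p₀` and `s₀*s₀ = e|_Y`. Then there are a closed
set `Z ⊆ X` with `Y ⊆ int(Z)`, a projection `p ∈ C(Z, M_n)` with `p|_Y = p₀` and
`p ⊥ q|_Z`, and `s ∈ C(Z, M_n)` with `ss* = p`, `s*s = e|_Z` and `s|_Y = s₀`. -/
theorem extend_projection_with_partial_isometry
    {X : Type*} [TopologicalSpace X] [CompactSpace X] [T2Space X]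
    (Y : Set X) (hY : IsClosed Y) (n : ℕ) (hn : 0 < n)
    (p₀ : C(Y, Mat n)) (hp₀ : ∀ y, IsProjMat (p₀ y))
    (q : C(X, Mat n)) (hq : ∀ x, IsProjMat (q x))
    (e : C(X, Mat n)) (he : ∀ x, IsProjMat (e x))
    (horth : ∀ (x : X) (hx : x ∈ Y), p₀ ⟨x, hx⟩ * q x = 0)
    (s₀ : C(Y, Mat n))
    (hs₀ : ∀ (x : X) (hx : x ∈ Y),
      s₀ ⟨x, hx⟩ * star (s₀ ⟨x, hx⟩) = p₀ ⟨x, hx⟩ ∧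
      star (s₀ ⟨x, hx⟩) * s₀ ⟨x, hx⟩ = e x) :
    ∃ Z : Set X, IsClosed Z ∧ Y ⊆ interior Z ∧
      ∃ (p : C(Z, Mat n)) (s : C(Z, Mat n)),
        (∀ z, IsProjMat (p z)) ∧
        (∀ (x : X) (hy : x ∈ Y) (hz : x ∈ Z), p ⟨x, hz⟩ = p₀ ⟨x, hy⟩) ∧
        (∀ (x : X) (hz : x ∈ Z), p ⟨x, hz⟩ * q x = 0) ∧
        (∀ (x : X) (hz : x ∈ Z),
          s ⟨x, hz⟩ * star (s ⟨x, hz⟩) = p ⟨x, hz⟩ ∧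
          star (s ⟨x, hz⟩) * s ⟨x, hz⟩ = e x) ∧
        (∀ (x : X) (hy : x ∈ Y) (hz : x ∈ Z), s ⟨x, hz⟩ = s₀ ⟨x, hy⟩) :=
  extend_projection_with_partial_isometry_general Y hY n p₀ q hq e he horth s₀ hs₀
end

section
/- Let A be a C*-algebra, a ∈ A a positive element, and p ∈ A a projection with p ≾ a (Cuntz subequivalent). Then there exist α ∈ (0,∞), a projection q ∈ A, and δ > 0 such that q is Murray–von Neumann equivalent to p, q ≤ αa, and g(a)q = q, where g : [0,∞) → [0,1] is the piecewise-linear function vanishing on [0,δ], equal to 1 on [2δ,∞), and linear on [δ,2δ]. -/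
/-!
Pick `u` with `‖u a u* − p‖ < 1/2` and cut `a` down to `(a − ε)₊ = r²` with `ε` so small that
still `‖u r² u* − p‖ < 1`. Then `p (u r² u*) p` is invertible in the corner `pAp`: conjugating it
by the inverse square root `c` of `p (u r² u*) p + (1 − p)` gives `w = c p u` with
`(w r)(w r)* = p`. So `q = (w r)* (w r) = r (w* w) r` is a projection equivalent to `p`; it is
dominated by `‖w* w‖ r² ≤ ‖w* w‖ a`, and it is fixed by every `g(a)` with `g = 1` on `[ε, ∞)`,
the support of `r`.
-/

section CStarRing

variable {E : Type*} [NormedRing E] [StarRing E] [CStarRing E]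

lemma IsStarProjection.star_mul_self_of_mul_star_self {w : E}
    (h : IsStarProjection (w * star w)) : IsStarProjection (star w * w) := by
  have hp := h.isIdempotentElem.eq
  have hw : w * star w * w = w := by
    have : (w - w * star w * w) * star (w - w * star w * w) = 0 := by
      calc _ = w * star w - w * star w * (w * star w) - w * star w * (w * star w)
            + w * star w * (w * star w) * (w * star w) := by
            simp only [star_sub, star_mul, star_star]; noncomm_ring
        _ = 0 := by simp only [hp]; abel
    exact (sub_eq_zero.mp ((CStarRing.mul_star_self_eq_zero_iff _).mp this)).symm
  refine ⟨?_, .star_mul_self w⟩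
  calc star w * w * (star w * w) = star w * (w * star w * w) := by simp only [mul_assoc]
    _ = star w * w := by rw [hw]

lemma IsStarProjection.norm_mul_mul_le {p : E} (hp : IsStarProjection p) (y : E) :
    ‖p * y * p‖ ≤ ‖y‖ :=
  calc ‖p * y * p‖ ≤ ‖p‖ * ‖y‖ * ‖p‖ := norm_mul₃_le
    _ ≤ 1 * ‖y‖ * 1 := by gcongr <;> exact hp.norm_le
    _ = ‖y‖ := by ring

end CStarRing

section CStarAlgebra

variable {A : Type*} [CStarAlgebra A]

lemma spectrum_pos_of_norm_sub_one_lt {b : A} (hb : ‖b - 1‖ < 1) :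
    ∀ t ∈ spectrum ℝ b, 0 < t := by
  nontriviality A
  intro t ht
  have h : t - 1 ∈ spectrum ℝ (b - 1) := by
    rw [← map_one (algebraMap ℝ A), ← spectrum.sub_singleton_eq]
    exact Set.sub_mem_sub ht rfl
  have h1 : |t - 1| ≤ ‖b - 1‖ := spectrum.norm_le_norm_of_mem h
  linarith [neg_abs_le (t - 1)]

lemma cfc_inv_sqrt_mul_self_mul_cfc_inv_sqrt {b : A} (hb : IsSelfAdjoint b)
    (hspec : ∀ t ∈ spectrum ℝ b, 0 < t) :
    cfc (fun t : ℝ => (√t)⁻¹) b * b * cfc (fun t : ℝ => (√t)⁻¹) b = 1 := by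
  have hcont : ContinuousOn (fun t : ℝ => (√t)⁻¹) (spectrum ℝ b) :=
    Real.continuous_sqrt.continuousOn.inv₀ fun t ht => (Real.sqrt_pos.mpr (hspec t ht)).ne'
  calc _ = cfc (fun t : ℝ => (√t)⁻¹ * t * (√t)⁻¹) b := by
        rw [cfc_mul (fun t : ℝ => (√t)⁻¹ * t) _ b, cfc_mul _ (fun t : ℝ => t) b,
          cfc_id' ℝ b]
    _ = cfc (fun _ : ℝ => (1 : ℝ)) b := cfc_congr fun t ht => by
        have := Real.sq_sqrt (hspec t ht).le
        have := (Real.sqrt_pos.mpr (hspec t ht)).ne'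
        field_simp
        linarith
    _ = 1 := cfc_const_one ℝ b

lemma IsStarProjection.exists_selfAdjoint_conj_mul_mul_eq_self {p x : A}
    (hp : IsStarProjection p) (hx : IsSelfAdjoint x) (hxp : ‖x - p‖ < 1) :
    ∃ c : A, IsSelfAdjoint c ∧ c * (p * x * p) * c = p := by
  have hpp := hp.isIdempotentElem.eq
  set b := p * x * p + (1 - p)
  have hbp : b * p = p * x * p := by
    simp only [b, add_mul, sub_mul, one_mul, mul_assoc, hpp]; abel
  have hpb : p * b = p * x * p := by
    simp only [b, mul_add, mul_sub, mul_one, ← mul_assoc, hpp]; abel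
  have hb : IsSelfAdjoint b :=
    (hx.conjugate_self hp.isSelfAdjoint).add (.sub (.one A) hp.isSelfAdjoint)
  have hb1 : ‖b - 1‖ < 1 := by
    have : b - 1 = p * (x - p) * p := by
      simp only [b, mul_sub, sub_mul, hpp]; abel
    exact this ▸ (hp.norm_mul_mul_le _).trans_lt hxp
  set c := cfc (fun t : ℝ => (√t)⁻¹) b
  have hcp : Commute c p := Commute.cfc_real (hbp.trans hpb.symm) _
  refine ⟨c, cfc_predicate _ _, ?_⟩
  calc c * (p * x * p) * c = c * b * c * p := by
        rw [← hbp]; simp only [mul_assoc, hcp.symm.eq]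
    _ = p := by
        rw [cfc_inv_sqrt_mul_self_mul_cfc_inv_sqrt hb (spectrum_pos_of_norm_sub_one_lt hb1),
          one_mul]

lemma cfc_mul_cfc_eq_right_of_eq_one {a : A} {f g : ℝ → ℝ}
    (h : ∀ t ∈ spectrum ℝ a, f t ≠ 0 → g t = 1)
    (hg : ContinuousOn g (spectrum ℝ a) := by cfc_cont_tac)
    (hf : ContinuousOn f (spectrum ℝ a) := by cfc_cont_tac) :
    cfc g a * cfc f a = cfc f a := by
  rw [← cfc_mul g f a]
  refine cfc_congr fun t ht => ?_
  by_cases hft : f t = 0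
  · simp [hft]
  · simp [h t ht hft]

lemma cfc_ramp_mul_cfc_sqrt_max_sub (a : A) {ε : ℝ} (hε : 0 < ε) :
    cfc (fun t : ℝ => min 1 (max ((t - ε / 2) / (ε / 2)) 0)) a
        * cfc (fun t : ℝ => √(max (t - ε) 0)) a
      = cfc (fun t : ℝ => √(max (t - ε) 0)) a := by
  refine cfc_mul_cfc_eq_right_of_eq_one (fun t _ ht => min_eq_left (le_max_of_le_left ?_))
    (by fun_prop) (by fun_prop)
  have : ε < t := by
    by_contra! h
    exact ht (by simp [max_eq_right (sub_nonpos.mpr h)])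
  rw [le_div_iff₀ (by positivity)]
  linarith

variable [PartialOrder A] [StarOrderedRing A]

lemma cfc_max_sub_le_self {a : A} (ha : 0 ≤ a) {ε : ℝ} (hε : 0 ≤ ε) :
    cfc (fun t : ℝ => max (t - ε) 0) a ≤ a := by
  conv_rhs => rw [← cfc_id' ℝ a]
  exact cfc_mono fun t ht => max_le (by linarith) (spectrum_nonneg_of_nonneg ha ht)

lemma norm_sub_cfc_max_sub_le {a : A} (ha : 0 ≤ a) {ε : ℝ} (hε : 0 ≤ ε) :
    ‖a - cfc (fun t : ℝ => max (t - ε) 0) a‖ ≤ ε := by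
  nth_rewrite 1 [← cfc_id' ℝ a]
  rw [← cfc_sub (fun t : ℝ => t) (fun t : ℝ => max (t - ε) 0) a]
  refine norm_cfc_le hε fun t ht => ?_
  have := spectrum_nonneg_of_nonneg ha ht
  rw [Real.norm_eq_abs, abs_le]
  constructor <;> cases le_total (t - ε) 0 <;> simp [*] <;> linarith

lemma exists_norm_conj_cfc_max_sub_sub_lt {a p u : A} (ha : 0 ≤ a)
    (hu : ‖u * a * star u - p‖ < 1 / 2) :
    ∃ ε > 0, ‖u * cfc (fun t : ℝ => max (t - ε) 0) a * star u - p‖ < 1 := by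
  set ε : ℝ := 1 / (2 * (‖u‖ ^ 2 + 1))
  have hε : 0 < ε := by positivity
  refine ⟨ε, hε, ?_⟩
  set aε := cfc (fun t : ℝ => max (t - ε) 0) a
  have hcut : ‖u * (aε - a) * star u‖ < 1 / 2 :=
    calc ‖u * (aε - a) * star u‖ ≤ ‖u‖ * ‖aε - a‖ * ‖star u‖ := norm_mul₃_le
      _ ≤ ‖u‖ * ε * ‖u‖ := by
          rw [norm_star, norm_sub_rev]; gcongr; exact norm_sub_cfc_max_sub_le ha hε.le
      _ = 1 / 2 - ε := by simp only [ε]; field_simp; ring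
      _ < 1 / 2 := by linarith
  calc ‖u * aε * star u - p‖ = ‖u * (aε - a) * star u + (u * a * star u - p)‖ := by
        congr 1; noncomm_ring
    _ ≤ ‖u * (aε - a) * star u‖ + ‖u * a * star u - p‖ := norm_add_le _ _
    _ < 1 := by linarith

end CStarAlgebra

/-- Lemma 2.5, after Lemma 2.19 of [ArPrTm]: Let `A` be a (unital)
C*-algebra, `a ∈ A` positive, and `p ∈ A` a projection with `p ≾ a` (Cuntz
subequivalence: some sequence `vₖ a vₖ* → p`). Then there exist `α > 0`, a projection
`q ∈ A` Murray–von Neumann equivalent to `p`, and `δ > 0` such that `q ≤ α a` and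
`g(a) q = q`, where `g` vanishes on `[0,δ]`, is 1 on `[2δ,∞)`, and is linear in between
(so `g(t) = min 1 (max ((t-δ)/δ) 0)` for `t ≥ 0`). -/
theorem cuntz_below_gives_dominated_projection
    {A : Type*} [CStarAlgebra A] [PartialOrder A] [StarOrderedRing A]
    (a : A) (ha : 0 ≤ a) (p : A) (hp : p * p = p ∧ star p = p)
    (hcuntz : ∃ v : ℕ → A,
      Filter.Tendsto (fun k => v k * a * star (v k)) Filter.atTop (nhds p)) :
    ∃ (α : ℝ), 0 < α ∧ ∃ (q : A) (δ : ℝ), 0 < δ ∧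
      (q * q = q ∧ star q = q) ∧
      (∃ v : A, v * star v = p ∧ star v * v = q) ∧
      q ≤ α • a ∧
      cfc (fun t : ℝ => min 1 (max ((t - δ) / δ) 0)) a * q = q := by
  have hp' : IsStarProjection p := isStarProjection_iff'.mpr hp
  obtain ⟨v, hv⟩ := hcuntz
  obtain ⟨k, hk⟩ :=
    (hv.eventually (Metric.ball_mem_nhds p (by norm_num : (0 : ℝ) < 1 / 2))).exists
  obtain ⟨ε, hε, hclose⟩ := exists_norm_conj_cfc_max_sub_sub_lt ha (mem_ball_iff_norm.mp hk)
  set r := cfc (fun t : ℝ => √(max (t - ε) 0)) a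
  have hr : IsSelfAdjoint r := cfc_predicate _ a
  have hrr : r * r = cfc (fun t : ℝ => max (t - ε) 0) a := by
    rw [← cfc_mul _ _ a]; exact cfc_congr fun t _ => Real.mul_self_sqrt (le_max_right _ 0)
  obtain ⟨c, hc, hcx⟩ := hp'.exists_selfAdjoint_conj_mul_mul_eq_self
    ((hrr ▸ cfc_predicate _ a : IsSelfAdjoint (r * r)).conjugate (v k)) (hrr ▸ hclose)
  set w := c * p * v k
  set z := star w * w
  have hww : w * r * star (w * r) = p := by
    rw [← hcx]; simp only [w, star_mul, hr.star_eq, hc.star_eq, hp.2]; noncomm_ring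
  have hq_eq : star (w * r) * (w * r) = r * z * r := by
    simp only [z, star_mul, hr.star_eq]; noncomm_ring
  obtain ⟨hqq, hqs⟩ := isStarProjection_iff'.mp (hww ▸ hp').star_mul_self_of_mul_star_self
  refine ⟨‖z‖ + 1, by positivity, _, ε / 2, by positivity, ⟨hqq, hqs⟩, ⟨_, hww, rfl⟩, ?_, ?_⟩
  · calc star (w * r) * (w * r) = star r * z * r := by rw [hq_eq, hr.star_eq]
      _ ≤ ‖z‖ • (star r * r) :=
          CStarAlgebra.star_left_conjugate_le_norm_smul (.star_mul_self w)
      _ ≤ ‖z‖ • a := by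
          rw [hr.star_eq, hrr]; gcongr; exact cfc_max_sub_le_self ha hε.le
      _ ≤ (‖z‖ + 1) • a := by rw [add_smul, one_smul]; exact le_add_of_nonneg_right ha
  · rw [hq_eq, ← mul_assoc, ← mul_assoc]
    congr 2
    exact cfc_ramp_mul_cfc_sqrt_max_sub a hε
end

section
/- Let X be a compact Hausdorff space. Then the radius of comparison rc(C(X)) equals the least r ∈ ℤ_{≥0} ∪ {∞} such that whenever n is a positive integer and a, b ∈ C(X, M_n) are positive with rank(a(x)) + r + 1 ≤ rank(b(x)) for all x ∈ X, then a ≾ b in Cuntz comparison. -/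
open scoped ComplexOrder ENNReal

/-- Cuntz subequivalence `a ≾ b` in `C(X, M_n)`: some sequence `vₖ b vₖ*` converges
uniformly to `a`. -/
def CuntzLe {X : Type*} [TopologicalSpace X] {n : ℕ} (a b : C(X, Mat n)) : Prop :=
  ∃ v : ℕ → C(X, Mat n),
    TendstoUniformly (fun k x => v k x * b x * star (v k x)) (fun x => a x) Filter.atTop

/-- The radius of comparison of `C(X)`: the infimum of all `ρ ∈ [0,∞]` such that for
every `n` and all positive `a, b ∈ C(X, M_n)`, if `rank (a x) + ρ < rank (b x)` for
all `x ∈ X` (the pointwise rank gap, corresponding to the quasitrace/point-evaluation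
criterion for commutative C*-algebras), then `a ≾ b`. -/
noncomputable def rcCX (X : Type*) [TopologicalSpace X] : ℝ≥0∞ :=
  sInf {ρ : ℝ≥0∞ | ∀ n : ℕ, 0 < n → ∀ a b : C(X, Mat n),
    (∀ x, (a x).PosSemidef) → (∀ x, (b x).PosSemidef) →
    (∀ x, ((a x).rank : ℝ≥0∞) + ρ < ((b x).rank : ℝ≥0∞)) → CuntzLe a b}

section Aux

variable {X : Type*} [TopologicalSpace X]

/-- The defining set of `rcCX`. -/
def rcSet (X : Type*) [TopologicalSpace X] : Set ℝ≥0∞ :=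
  {ρ : ℝ≥0∞ | ∀ n : ℕ, 0 < n → ∀ a b : C(X, Mat n),
    (∀ x, (a x).PosSemidef) → (∀ x, (b x).PosSemidef) →
    (∀ x, ((a x).rank : ℝ≥0∞) + ρ < ((b x).rank : ℝ≥0∞)) → CuntzLe a b}

lemma rcCX_eq : rcCX X = sInf (rcSet X) := rfl

lemma top_mem_rcSet : (⊤ : ℝ≥0∞) ∈ rcSet X := by
  intro n hn a b ha hb hrank
  by_cases hX : Nonempty X
  · exfalso
    obtain ⟨x⟩ := hX
    have h := hrank x
    simp at h
  · refine ⟨fun _ => 0, ?_⟩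
    intro u hu
    filter_upwards with k
    intro x
    exact absurd ⟨x⟩ hX

lemma floor_mem_rcSet {ρ : ℝ≥0∞} (hρ : ρ ∈ rcSet X) (htop : ρ ≠ ⊤) :
    ((⌊ρ.toNNReal⌋₊ : ℝ≥0∞)) ∈ rcSet X := by
  intro n hn a b ha hb hrank
  apply hρ n hn a b ha hb
  intro x
  have h := hrank x
  set m := ⌊ρ.toNNReal⌋₊
  have h1 : (a x).rank + m < (b x).rank := by exact_mod_cast h
  have h2 : ((a x).rank : ℝ≥0∞) + (m + 1 : ℕ) ≤ (b x).rank := by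
    exact_mod_cast Nat.succ_le_of_lt h1
  have hlt : ρ < ((m + 1 : ℕ) : ℝ≥0∞) := by
    have h3 : ρ.toNNReal < ((m : NNReal) + 1 : NNReal) := Nat.lt_floor_add_one _
    rw [← ENNReal.coe_toNNReal htop]
    calc (ρ.toNNReal : ℝ≥0∞) < (((m : NNReal) + 1 : NNReal) : ℝ≥0∞) := ENNReal.coe_lt_coe.mpr h3
      _ = ((m + 1 : ℕ) : ℝ≥0∞) := by push_cast; ring
  calc ((a x).rank : ℝ≥0∞) + ρ < ((a x).rank : ℝ≥0∞) + ((m + 1 : ℕ) : ℝ≥0∞) :=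
        ENNReal.add_lt_add_left (by simp) hlt
    _ ≤ ((b x).rank : ℝ≥0∞) := by exact_mod_cast h2

lemma nat_mem_rcSet_of_mem_T {r : ℝ≥0∞} (k : ℕ) (hk : r = (k : ℝ≥0∞))
    (h : ∀ n : ℕ, 0 < n → ∀ a b : C(X, Mat n),
      (∀ x, (a x).PosSemidef) → (∀ x, (b x).PosSemidef) →
      (∀ x, ((a x).rank : ℝ≥0∞) + r + 1 ≤ ((b x).rank : ℝ≥0∞)) → CuntzLe a b) :
    r ∈ rcSet X := by
  subst hk
  intro n hn a b ha hb hrank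
  apply h n hn a b ha hb
  intro x
  have h1 : (a x).rank + k < (b x).rank := by exact_mod_cast hrank x
  have : (a x).rank + k + 1 ≤ (b x).rank := h1
  exact_mod_cast this

end Aux

/-- Lemma 2.7: For `X` compact Hausdorff, `rc(C(X))` is the least
`r ∈ ℤ_{≥0} ∪ {∞}` such that whenever `n ≥ 1` and `a, b ∈ C(X, M_n)` are positive with
`rank (a x) + r + 1 ≤ rank (b x)` for all `x ∈ X`, then `a ≾ b`. -/
theorem rcCX_isLeast_integer_rank_gap
    {X : Type*} [TopologicalSpace X] [CompactSpace X] [T2Space X] :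
    IsLeast {r : ℝ≥0∞ | (r = ⊤ ∨ ∃ k : ℕ, r = (k : ℝ≥0∞)) ∧
        ∀ n : ℕ, 0 < n → ∀ a b : C(X, Mat n),
          (∀ x, (a x).PosSemidef) → (∀ x, (b x).PosSemidef) →
          (∀ x, ((a x).rank : ℝ≥0∞) + r + 1 ≤ ((b x).rank : ℝ≥0∞)) → CuntzLe a b}
      (rcCX X) := by
  classical
  have hlb : ∀ r ∈ {r : ℝ≥0∞ | (r = ⊤ ∨ ∃ k : ℕ, r = (k : ℝ≥0∞)) ∧
        ∀ n : ℕ, 0 < n → ∀ a b : C(X, Mat n),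
          (∀ x, (a x).PosSemidef) → (∀ x, (b x).PosSemidef) →
          (∀ x, ((a x).rank : ℝ≥0∞) + r + 1 ≤ ((b x).rank : ℝ≥0∞)) → CuntzLe a b},
      rcCX X ≤ r := by
    rintro r ⟨hint, h⟩
    rcases hint with rfl | ⟨k, hk⟩
    · exact le_top
    · exact sInf_le (nat_mem_rcSet_of_mem_T k hk h)
  constructor
  swap
  · exact hlb
  · by_cases hK : ∃ k : ℕ, ((k : ℝ≥0∞)) ∈ rcSet X
    · set k₀ := Nat.find hK with hk₀
      have hspec : ((k₀ : ℝ≥0∞)) ∈ rcSet X := Nat.find_spec hK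
      have heq : rcCX X = (k₀ : ℝ≥0∞) := by
        refine le_antisymm (sInf_le hspec) (le_sInf ?_)
        intro ρ hρ
        by_cases htop : ρ = ⊤
        · simp [htop]
        · have hm := floor_mem_rcSet hρ htop
          have hle : k₀ ≤ ⌊ρ.toNNReal⌋₊ := Nat.find_min' hK hm
          calc (k₀ : ℝ≥0∞) ≤ (⌊ρ.toNNReal⌋₊ : ℝ≥0∞) := by exact_mod_cast hle
            _ ≤ (ρ.toNNReal : ℝ≥0∞) := by
                exact_mod_cast ENNReal.coe_le_coe.mpr (Nat.floor_le ρ.toNNReal.2)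
            _ = ρ := ENNReal.coe_toNNReal htop
      rw [heq]
      refine ⟨Or.inr ⟨k₀, rfl⟩, ?_⟩
      intro n hn a b ha hb hrank
      apply hspec n hn a b ha hb
      intro x
      have h1 : ((a x).rank : ℝ≥0∞) + k₀ + 1 ≤ (b x).rank := hrank x
      have h2 : (a x).rank + k₀ + 1 ≤ (b x).rank := by exact_mod_cast h1
      have : (a x).rank + k₀ < (b x).rank := h2
      exact_mod_cast this
    · have heq : rcCX X = ⊤ := by
        rw [rcCX_eq, sInf_eq_top]
        intro ρ hρ
        by_contra htop
        exact hK ⟨⌊ρ.toNNReal⌋₊, floor_mem_rcSet hρ htop⟩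
      rw [heq]
      refine ⟨Or.inl rfl, ?_⟩
      intro n hn a b ha hb hrank
      by_cases hX : Nonempty X
      · exfalso
        obtain ⟨x⟩ := hX
        have := hrank x
        simp at this
      · exact top_mem_rcSet n hn a b ha hb fun x => absurd ⟨x⟩ hX
end
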